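/- arXiv:2412.08053 — 3 statements merged into one kernel-verified Lean document; each statement's English description precedes it below -/
import Mathlib

section
/- Let f : ℝ → ℝ. Suppose that for all real numbers x, y, z with 0 < x < y < z there exist real numbers a > 0 and b > 0 such that a·y + b·f(y) < a·x + b·f(x) and a·y + b·f(y) < a·z + b·f(z) (i.e., every interior point of the curve is strictly optimal against any smaller and larger point under some choice of positive weights). Then f is strictly convex on the interval (0, ∞). -/
/-- If for all `0 < x < y < z` there exist positive weights `a, b` under which the
middle point `y` has strictly smaller composed loss `a·t + b·f t` than both `x`
and `z`, then `f` is strictly convex on `(0, ∞)`. -/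
theorem stmt_3 (f : ℝ → ℝ)
    (h : ∀ x y z : ℝ, 0 < x → x < y → y < z →
      ∃ a b : ℝ, 0 < a ∧ 0 < b ∧
        a * y + b * f y < a * x + b * f x ∧
        a * y + b * f y < a * z + b * f z) :
    StrictConvexOn ℝ (Set.Ioi (0 : ℝ)) f := by
  apply strictConvexOn_of_slope_strict_mono_adjacent (convex_Ioi 0)
  intro x y z hx _ hxy hyz
  obtain ⟨a, b, ha, hb, h1, h2⟩ := h x y z hx hxy hyz
  rw [div_lt_div_iff₀ (by linarith) (by linarith)]
  have h1' : a * (y - x) < b * (f x - f y) := by nlinarith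
  have h2' : b * (f y - f z) < a * (z - y) := by nlinarith
  nlinarith [mul_pos ha (sub_pos.mpr hxy), mul_pos ha (sub_pos.mpr hyz),
    mul_lt_mul_of_pos_left h1' (sub_pos.mpr hyz),
    mul_lt_mul_of_pos_left h2' (sub_pos.mpr hxy)]
end

section
/- (Deterministic form of Proposition 1.) Fix λ ∈ (0, 1) and α ∈ (0, 1). Let f : ℝ → ℝ and let L : ℝ → ℝ be differentiable at α with derivative L′. Suppose the derivative function of f is differentiable at L(α) with derivative c > 0, that for every β ∈ (0, 1) the first-order condition f′(L(β)) = −(β·λ)/((1 − β)·(1 − λ)) holds, and let μ, σ, ς be real numbers with σ > 0 and L(α) ≠ μ. Then the controller-gradient function g(β) = ς − ((L(β) − μ)/σ)³ is differentiable at α and its derivative at α is strictly positive. -/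
/-- Deterministic form of Proposition 1: under the first-order condition linking the
derivative of `f` to the weights, with `c = f″(L α) > 0`, `σ > 0` and `L α ≠ μ`,
the controller-gradient function `g β = ς - ((L β - μ)/σ)³` is differentiable at
`α` and its derivative at `α` is strictly positive. -/
theorem stmt_8 (lam α : ℝ) (hlam : lam ∈ Set.Ioo (0 : ℝ) 1)
    (hα : α ∈ Set.Ioo (0 : ℝ) 1)
    (f L : ℝ → ℝ) (L' : ℝ) (hL : HasDerivAt L L' α)
    (c : ℝ) (hc : 0 < c) (hf' : HasDerivAt (deriv f) c (L α))
    (hfoc : ∀ β ∈ Set.Ioo (0 : ℝ) 1,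
      deriv f (L β) = -(β * lam) / ((1 - β) * (1 - lam)))
    (μ σ ς : ℝ) (hσ : 0 < σ) (hμ : L α ≠ μ) :
    DifferentiableAt ℝ (fun β : ℝ => ς - ((L β - μ) / σ) ^ 3) α ∧
    0 < deriv (fun β : ℝ => ς - ((L β - μ) / σ) ^ 3) α := by
  obtain ⟨hl0, hl1⟩ := hlam
  obtain ⟨ha0, ha1⟩ := hα
  have h1a : (1 : ℝ) - α ≠ 0 := by linarith
  have h1l : (1 : ℝ) - lam ≠ 0 := by linarith
  -- derivative of the explicit quotient
  have hφ : HasDerivAt (fun β : ℝ => -(β * lam) / ((1 - β) * (1 - lam)))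
      (-(lam / ((1 - lam) * (1 - α) ^ 2))) α := by
    have hnum : HasDerivAt (fun β : ℝ => -(β * lam)) (-lam) α := by
      simpa using ((hasDerivAt_id α).mul_const lam).fun_neg
    have hden : HasDerivAt (fun β : ℝ => (1 - β) * (1 - lam)) (-(1 - lam)) α := by
      simpa using (((hasDerivAt_id α).const_sub 1).mul_const (1 - lam))
    have := hnum.fun_div hden (by
      intro h
      exact (mul_ne_zero h1a h1l) h)
    refine this.congr_deriv ?_
    rw [← neg_div, div_eq_div_iff (by positivity) (by positivity)]
    ring
  -- chain rule: deriv f ∘ L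
  have hcomp : HasDerivAt (fun β : ℝ => deriv f (L β)) (c * L') α := hf'.comp α hL
  -- eventual equality
  have heq : (fun β : ℝ => deriv f (L β)) =ᶠ[nhds α]
      (fun β : ℝ => -(β * lam) / ((1 - β) * (1 - lam))) := by
    filter_upwards [isOpen_Ioo.mem_nhds (Set.mem_Ioo.mpr ⟨ha0, ha1⟩)] with β hβ
    exact hfoc β hβ
  have hcomp' : HasDerivAt (fun β : ℝ => -(β * lam) / ((1 - β) * (1 - lam))) (c * L') α :=
    hcomp.congr_of_eventuallyEq heq.symm
  have hder : c * L' = -(lam / ((1 - lam) * (1 - α) ^ 2)) :=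
    hcomp'.unique hφ
  have hL'neg : L' < 0 := by
    have hpos : 0 < lam / ((1 - lam) * (1 - α) ^ 2) := by
      apply div_pos hl0
      apply mul_pos (by linarith)
      positivity
    nlinarith
  -- derivative of g
  have hg : HasDerivAt (fun β : ℝ => ς - ((L β - μ) / σ) ^ 3)
      (-((3 : ℕ) * ((L α - μ) / σ) ^ 2 * (L' / σ))) α := by
    exact (((hL.sub_const μ).div_const σ).pow 3).const_sub ς
  have hsq : 0 < ((L α - μ) / σ) ^ 2 := by
    have : (L α - μ) / σ ≠ 0 := div_ne_zero (sub_ne_zero.mpr hμ) (ne_of_gt hσ)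
    positivity
  have hpos : 0 < -((3 : ℕ) * ((L α - μ) / σ) ^ 2 * (L' / σ)) := by
    have : L' / σ < 0 := div_neg_of_neg_of_pos hL'neg hσ
    push_cast
    nlinarith
  exact ⟨hg.differentiableAt, by rw [hg.deriv]; exact hpos⟩
end

section
/- (Discrete form of Proposition 1.) Fix λ ∈ (0, 1). Let f : ℝ → ℝ be differentiable on (0, ∞) and strictly convex on (0, ∞). Let α₁, α₂ be real numbers with 0 < α₁ < α₂ < 1, and let L₁, L₂ ∈ (0, ∞) satisfy f′(L₁) = −(α₁·λ)/((1 − α₁)·(1 − λ)) and f′(L₂) = −(α₂·λ)/((1 − α₂)·(1 − λ)). Let μ, σ, ς be real numbers with σ > 0. Then the controller gradient strictly increases from α₁ to α₂: ς − ((L₁ − μ)/σ)³ < ς − ((L₂ − μ)/σ)³. -/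
/-- Discrete form of Proposition 1: with `f` differentiable and strictly convex on
`(0, ∞)`, optimal invisibility losses `L₁, L₂ ∈ (0, ∞)` at weights
`0 < α₁ < α₂ < 1` determined by the first-order conditions, and `σ > 0`, the
controller gradient strictly increases: `ς - ((L₁ - μ)/σ)³ < ς - ((L₂ - μ)/σ)³`. -/
theorem stmt_10 (lam : ℝ) (hlam : lam ∈ Set.Ioo (0 : ℝ) 1)
    (f : ℝ → ℝ) (hdiff : DifferentiableOn ℝ f (Set.Ioi (0 : ℝ)))
    (hconv : StrictConvexOn ℝ (Set.Ioi (0 : ℝ)) f)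
    (α₁ α₂ : ℝ) (h₁ : 0 < α₁) (h₁₂ : α₁ < α₂) (h₂ : α₂ < 1)
    (L₁ L₂ : ℝ) (hL₁ : L₁ ∈ Set.Ioi (0 : ℝ)) (hL₂ : L₂ ∈ Set.Ioi (0 : ℝ))
    (hfoc₁ : deriv f L₁ = -(α₁ * lam) / ((1 - α₁) * (1 - lam)))
    (hfoc₂ : deriv f L₂ = -(α₂ * lam) / ((1 - α₂) * (1 - lam)))
    (μ σ ς : ℝ) (hσ : 0 < σ) :
    ς - ((L₁ - μ) / σ) ^ 3 < ς - ((L₂ - μ) / σ) ^ 3 := by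
  obtain ⟨hlam0, hlam1⟩ := hlam
  have hmono : StrictMonoOn (deriv f) (Set.Ioi (0 : ℝ)) :=
    hconv.strictMonoOn_deriv fun x hx =>
      (hdiff x hx).differentiableAt (isOpen_Ioi.mem_nhds hx)
  have hd1 : (0:ℝ) < (1 - α₁) * (1 - lam) := by nlinarith
  have hd2 : (0:ℝ) < (1 - α₂) * (1 - lam) := by nlinarith
  have hlt : deriv f L₂ < deriv f L₁ := by
    rw [hfoc₁, hfoc₂, div_lt_div_iff₀ hd2 hd1]
    nlinarith [mul_pos (mul_pos hlam0 (sub_pos.mpr hlam1)) (sub_pos.mpr h₁₂)]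
  have hL : L₂ < L₁ := by
    by_contra h
    push_neg at h
    rcases eq_or_lt_of_le h with rfl | h'
    · exact lt_irrefl _ hlt
    · exact absurd (hmono hL₁ hL₂ h') (not_lt.mpr hlt.le)
  have hcube : ((L₂ - μ) / σ) ^ 3 < ((L₁ - μ) / σ) ^ 3 := by
    have : (L₂ - μ) / σ < (L₁ - μ) / σ :=
      div_lt_div_of_pos_right (by linarith) hσ
    exact (Odd.strictMono_pow (by decide)) this
  linarith
end
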